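/- (Proposition 3.) Let (A^F, R^F, A^?, R^?) be an incomplete AF and a ∈ A^F. Let σ be a function assigning to every AF (A,R) a set σ(A,R) of subsets of A, and let φ_σ be a DL-PA formula such that for every valuation v ⊆ 𝒫, v ⊨ φ_σ if and only if E(v) ∈ σ(A_v, R_v). Set makeExt^σ = vary(IN_U); φ_σ?, v_IAF = AW_{A^F} ∪ ATT_{R^F}, and makeComp^IAF = mkTrueSome(AW_{A^?}); mkTrueSome(ATT_{R^?}). Then: (1) [for every completion (A*,R*) of the IAF and every E ∈ σ(A*,R*), a ∈ E] iff v_IAF ⊨ [makeComp^IAF; makeExt^σ] in_a; (2) [for every completion (A*,R*) there is E ∈ σ(A*,R*) with a ∈ E] iff v_IAF ⊨ [makeComp^IAF]⟨makeExt^σ⟩ in_a; (3) [there is a completion (A*,R*) and E ∈ σ(A*,R*) with a ∈ E] iff v_IAF ⊨ ⟨makeComp^IAF; makeExt^σ⟩ in_a; (4) [there is a completion (A*,R*) such that every E ∈ σ(A*,R*) contains a] iff v_IAF ⊨ ⟨makeComp^IAF⟩[makeExt^σ] in_a. -/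
import Mathlib


noncomputable section

namespace DLPA

/-- Propositional variables: awareness, acceptance, attack, auxiliary acceptance
copies, plus countably many further auxiliary variables. -/
inductive PVar (U : Type) : Type
  | aw : U → PVar U
  | inn : U → PVar U
  | att : U → U → PVar U
  | inn' : U → PVar U
  | aux : Nat → PVar U

-- DL-PA formulas and programs, by mutual recursion.
mutual
  inductive Form (U : Type) : Type
    | var : PVar U → Form U
    | neg : Form U → Form U
    | conj : Form U → Form U → Form U
    | box : Prog U → Form U → Form U
  inductive Prog (U : Type) : Type
    | add : PVar U → Prog U           -- +p
    | rem : PVar U → Prog U           -- −p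
    | test : Form U → Prog U          -- φ?
    | seq : Prog U → Prog U → Prog U
    | choice : Prog U → Prog U → Prog U
    | conv : Prog U → Prog U
end

variable {U : Type}

/-- A valuation is a set of propositional variables. -/
abbrev Val (U : Type) := Set (PVar U)

-- Satisfaction of formulas and interpretation of programs, by mutual recursion.
mutual
  def Sat : Val U → Form U → Prop
    | v, Form.var p => p ∈ v
    | v, Form.neg φ => ¬ Sat v φ
    | v, Form.conj φ ψ => Sat v φ ∧ Sat v ψ
    | v, Form.box π φ => ∀ w, Rel π v w → Sat w φ
  def Rel : Prog U → Val U → Val U → Prop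
    | Prog.add p, v, w => w = v ∪ {p}
    | Prog.rem p, v, w => w = v \ {p}
    | Prog.test φ, v, w => w = v ∧ Sat v φ
    | Prog.seq π₁ π₂, v, w => ∃ u, Rel π₁ v u ∧ Rel π₂ u w
    | Prog.choice π₁ π₂, v, w => Rel π₁ v w ∨ Rel π₂ v w
    | Prog.conv π, v, w => Rel π w v
end

def Form.falsum : Form U := Form.conj (Form.var (PVar.aux 0)) (Form.neg (Form.var (PVar.aux 0)))
def Form.top : Form U := Form.neg Form.falsum
def Form.impl (φ ψ : Form U) : Form U := Form.neg (Form.conj φ (Form.neg ψ))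
def Form.disj (φ ψ : Form U) : Form U := Form.neg (Form.conj (Form.neg φ) (Form.neg ψ))
def Form.equiv (φ ψ : Form U) : Form U := Form.conj (Form.impl φ ψ) (Form.impl ψ φ)
def Form.dia (π : Prog U) (φ : Form U) : Form U := Form.neg (Form.box π (Form.neg φ))
def Prog.skip : Prog U := Prog.test Form.top

/-- Sequential composition of a list of programs (`skip` for the empty list). -/
def seqList {β : Type} (f : β → Prog U) : List β → Prog U
  | [] => Prog.skip
  | p :: ps => Prog.seq (f p) (seqList f ps)

/-- Nondeterministic composition of a list of programs (`skip` for the empty list). -/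
def unionList {β : Type} (f : β → Prog U) : List β → Prog U
  | [] => Prog.skip
  | [p] => f p
  | p :: ps => Prog.choice (f p) (unionList f ps)

def mkTrueOne (L : List (PVar U)) : Prog U :=
  unionList (fun p => Prog.seq (Prog.test (Form.neg (Form.var p))) (Prog.add p)) L
def mkFalseOne (L : List (PVar U)) : Prog U :=
  unionList (fun p => Prog.seq (Prog.test (Form.var p)) (Prog.rem p)) L
def mkTrueSome (L : List (PVar U)) : Prog U :=
  seqList (fun p => Prog.choice (Prog.add p) Prog.skip) L
def mkFalseSome (L : List (PVar U)) : Prog U :=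
  seqList (fun p => Prog.choice (Prog.rem p) Prog.skip) L
def vary (L : List (PVar U)) : Prog U :=
  seqList (fun p => Prog.choice (Prog.add p) (Prog.rem p)) L
/-- dis(ATT_R): for each pair (x,y) in the list, make true att_{x,y} or att_{y,x}. -/
def dis (L : List (U × U)) : Prog U :=
  seqList (fun q => Prog.choice (Prog.add (PVar.att q.1 q.2)) (Prog.add (PVar.att q.2 q.1))) L

def conjList : List (Form U) → Form U
  | [] => Form.top
  | φ :: φs => Form.conj φ (conjList φs)
def disjList : List (Form U) → Form U
  | [] => Form.falsum
  | φ :: φs => Form.disj φ (disjList φs)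

/-- The elements of a finite universe in a fixed order. -/
def enum (U : Type) [Fintype U] : List U := Finset.univ.toList

def bigConj [Fintype U] (f : U → Form U) : Form U := conjList ((enum U).map f)
def bigDisj [Fintype U] (f : U → Form U) : Form U := disjList ((enum U).map f)

def INlist (U : Type) [Fintype U] : List (PVar U) := (enum U).map PVar.inn

/-- copy(IN_U) copies the value of in_x to in'_x, for every x ∈ U. -/
def copyIN (U : Type) [Fintype U] : Prog U :=
  seqList (fun x => Prog.choice
      (Prog.seq (Prog.test (Form.var (PVar.inn x))) (Prog.add (PVar.inn' x)))
      (Prog.seq (Prog.test (Form.neg (Form.var (PVar.inn x)))) (Prog.rem (PVar.inn' x))))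
    (enum U)

def Well (U : Type) [Fintype U] : Form U :=
  bigConj (fun x => Form.impl (Form.var (PVar.inn x)) (Form.var (PVar.aw x)))

def ConFree (U : Type) [Fintype U] : Form U :=
  Form.conj (Well U) (bigConj fun x => bigConj fun y =>
    Form.neg (Form.conj (Form.var (PVar.inn x))
      (Form.conj (Form.var (PVar.inn y)) (Form.var (PVar.att x y)))))

def AdmissibleF (U : Type) [Fintype U] : Form U :=
  Form.conj (ConFree U) (bigConj fun x => Form.impl (Form.var (PVar.inn x))
    (bigConj fun y => Form.impl (Form.conj (Form.var (PVar.aw y)) (Form.var (PVar.att y x)))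
      (bigDisj fun z => Form.conj (Form.var (PVar.inn z)) (Form.var (PVar.att z y)))))

def StableF (U : Type) [Fintype U] : Form U :=
  Form.conj (Well U) (bigConj fun x => Form.impl (Form.var (PVar.aw x))
    (Form.equiv (Form.var (PVar.inn x))
      (Form.neg (bigDisj fun y => Form.conj (Form.var (PVar.inn y)) (Form.var (PVar.att y x))))))

def CompleteF (U : Type) [Fintype U] : Form U :=
  Form.conj (ConFree U) (bigConj fun x => Form.equiv (Form.var (PVar.inn x))
    (bigConj fun y => Form.impl (Form.conj (Form.var (PVar.aw y)) (Form.var (PVar.att y x)))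
      (bigDisj fun z => Form.conj (Form.var (PVar.inn z)) (Form.var (PVar.att z y)))))

def GroundedF (U : Type) [Fintype U] : Form U :=
  Form.conj (CompleteF U)
    (Form.box (Prog.seq (mkFalseOne (INlist U)) (mkFalseSome (INlist U))) (Form.neg (CompleteF U)))

def PreferredF (U : Type) [Fintype U] : Form U :=
  Form.conj (AdmissibleF U)
    (Form.box (Prog.seq (mkTrueOne (INlist U)) (mkTrueSome (INlist U))) (Form.neg (AdmissibleF U)))

def NaiveF (U : Type) [Fintype U] : Form U :=
  Form.conj (ConFree U) (Form.box (mkTrueOne (INlist U)) (Form.neg (ConFree U)))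

def IncludedInCp (U : Type) [Fintype U] : Form U :=
  bigConj fun x => Form.impl
    (Form.disj (Form.var (PVar.inn x)) (Form.conj (Form.var (PVar.aw x))
      (bigDisj fun y => Form.conj (Form.var (PVar.inn y)) (Form.var (PVar.att y x)))))
    (Form.disj (Form.var (PVar.inn' x)) (Form.conj (Form.var (PVar.aw x))
      (bigDisj fun y => Form.conj (Form.var (PVar.inn' y)) (Form.var (PVar.att y x)))))

def IncludesCp (U : Type) [Fintype U] : Form U :=
  bigConj fun x => Form.impl
    (Form.disj (Form.var (PVar.inn' x)) (Form.conj (Form.var (PVar.aw x))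
      (bigDisj fun y => Form.conj (Form.var (PVar.inn' y)) (Form.var (PVar.att y x)))))
    (Form.disj (Form.var (PVar.inn x)) (Form.conj (Form.var (PVar.aw x))
      (bigDisj fun y => Form.conj (Form.var (PVar.inn y)) (Form.var (PVar.att y x)))))

/-- makeExt^σ = vary(IN_U); φ_σ? -/
def makeExt (U : Type) [Fintype U] (φ : Form U) : Prog U :=
  Prog.seq (vary (INlist U)) (Prog.test φ)

def SemiStableF (U : Type) [Fintype U] : Form U :=
  Form.conj (CompleteF U)
    (Form.box (Prog.seq (copyIN U) (makeExt U (CompleteF U)))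
      (Form.impl (IncludesCp U) (IncludedInCp U)))

/-- A_v -/
def Av (v : Val U) : Set U := {x | PVar.aw x ∈ v}
/-- R_v -/
def Rv (v : Val U) : Set (U × U) := {q | q.1 ∈ Av v ∧ q.2 ∈ Av v ∧ PVar.att q.1 q.2 ∈ v}
/-- E(v) -/
def Ev (v : Val U) : Set U := {x | PVar.inn x ∈ v}
/-- {x ∈ U : in'_x ∈ v} -/
def Cv (v : Val U) : Set U := {x | PVar.inn' x ∈ v}
/-- v_(A,R) = AW_A ∪ ATT_R -/
def valOf (A : Set U) (R : Set (U × U)) : Val U :=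
  (PVar.aw '' A) ∪ ((fun q : U × U => PVar.att q.1 q.2) '' R)

/-- E⁺, the set of arguments of A attacked by E in (A,R). -/
def attacked (A : Set U) (R : Set (U × U)) (E : Set U) : Set U :=
  {x ∈ A | ∃ y ∈ E, (y, x) ∈ R}
/-- E⊕ = E ∪ E⁺, the range of E. -/
def rangeOf (A : Set U) (R : Set (U × U)) (E : Set U) : Set U :=
  E ∪ attacked A R E

def IsConflictFree (A : Set U) (R : Set (U × U)) (E : Set U) : Prop :=
  E ⊆ A ∧ E ∩ attacked A R E = ∅
def Defends (A : Set U) (R : Set (U × U)) (E : Set U) (a : U) : Prop :=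
  ∀ x ∈ A, (x, a) ∈ R → x ∈ attacked A R E
def IsAdmissibleExt (A : Set U) (R : Set (U × U)) (E : Set U) : Prop :=
  IsConflictFree A R E ∧ ∀ a ∈ E, Defends A R E a
def IsStableExt (A : Set U) (R : Set (U × U)) (E : Set U) : Prop :=
  IsConflictFree A R E ∧ A \ E ⊆ attacked A R E
def IsCompleteExt (A : Set U) (R : Set (U × U)) (E : Set U) : Prop :=
  IsConflictFree A R E ∧ E = {a ∈ A | Defends A R E a}
def IsGroundedExt (A : Set U) (R : Set (U × U)) (E : Set U) : Prop :=
  IsCompleteExt A R E ∧ ∀ E', IsCompleteExt A R E' → E' ⊆ E → E' = E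
def IsPreferredExt (A : Set U) (R : Set (U × U)) (E : Set U) : Prop :=
  IsCompleteExt A R E ∧ ∀ E', IsCompleteExt A R E' → E ⊆ E' → E' = E
def IsNaiveExt (A : Set U) (R : Set (U × U)) (E : Set U) : Prop :=
  IsConflictFree A R E ∧ ∀ E', IsConflictFree A R E' → E ⊆ E' → E' = E
def IsSemiStableExt (A : Set U) (R : Set (U × U)) (E : Set U) : Prop :=
  IsCompleteExt A R E ∧ ¬ ∃ E', IsCompleteExt A R E' ∧ rangeOf A R E ⊂ rangeOf A R E'

end DLPA

end

noncomputable section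
open DLPA

/-- The list of awareness variables of a finite set of arguments, in a fixed order. -/
def AWlist {U : Type} (A : Finset U) : List (PVar U) := A.toList.map PVar.aw
/-- The list of attack variables of a finite attack relation, in a fixed order. -/
def ATTlist {U : Type} (R : Finset (U × U)) : List (PVar U) :=
  R.toList.map (fun q => PVar.att q.1 q.2)

/-- The defining conditions of an incomplete AF (A^F, R^F, A^?, R^?). -/
def IAFConds {U : Type} (AF Aq : Set U) (RF Rq : Set (U × U)) : Prop :=
  Disjoint AF Aq ∧ Disjoint RF Rq ∧
    RF ⊆ (AF ∪ Aq) ×ˢ (AF ∪ Aq) ∧ Rq ⊆ (AF ∪ Aq) ×ˢ (AF ∪ Aq)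

/-- (A*, R*) is a completion of the IAF (A^F, R^F, A^?, R^?). -/
def IsCompletionOfIAF {U : Type} (AF Aq : Set U) (RF Rq : Set (U × U))
    (As : Set U) (Rs : Set (U × U)) : Prop :=
  AF ⊆ As ∧ As ⊆ AF ∪ Aq ∧
    RF ∩ As ×ˢ As ⊆ Rs ∧ Rs ⊆ (RF ∪ Rq) ∩ As ×ˢ As

end

section Aux
open DLPA
variable {U : Type}

lemma sat_var (v : Val U) (p : PVar U) : Sat v (Form.var p) ↔ p ∈ v := Iff.rfl
lemma sat_top (v : Val U) : Sat v Form.top := by simp [Form.top, Form.falsum, Sat]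
lemma sat_box (v : Val U) (π : Prog U) (φ : Form U) :
    Sat v (Form.box π φ) ↔ ∀ w, DLPA.Rel π v w → Sat w φ := Iff.rfl
lemma sat_dia (v : Val U) (π : Prog U) (φ : Form U) :
    Sat v (Form.dia π φ) ↔ ∃ w, DLPA.Rel π v w ∧ Sat w φ := by
  simp [Form.dia, Sat, sat_box]
lemma rel_seq (π₁ π₂ : Prog U) (v w : Val U) :
    DLPA.Rel (Prog.seq π₁ π₂) v w ↔ ∃ u, DLPA.Rel π₁ v u ∧ DLPA.Rel π₂ u w := Iff.rfl
lemma rel_choice (π₁ π₂ : Prog U) (v w : Val U) :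
    DLPA.Rel (Prog.choice π₁ π₂) v w ↔ DLPA.Rel π₁ v w ∨ DLPA.Rel π₂ v w := Iff.rfl
lemma rel_skip (v w : Val U) : DLPA.Rel Prog.skip v w ↔ w = v := by
  simp [Prog.skip, DLPA.Rel, sat_top]
lemma rel_add (p : PVar U) (v w : Val U) : DLPA.Rel (Prog.add p) v w ↔ w = v ∪ {p} := Iff.rfl
lemma rel_rem (p : PVar U) (v w : Val U) : DLPA.Rel (Prog.rem p) v w ↔ w = v \ {p} := Iff.rfl
lemma rel_test (φ : Form U) (v w : Val U) :
    DLPA.Rel (Prog.test φ) v w ↔ w = v ∧ Sat v φ := Iff.rfl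

lemma rel_mkTrueSome (L : List (PVar U)) (v w : Val U) :
    DLPA.Rel (mkTrueSome L) v w ↔ v ⊆ w ∧ w ⊆ v ∪ {p | p ∈ L} := by
  induction L generalizing v with
  | nil =>
      have hset : {p : PVar U | p ∈ ([] : List (PVar U))} = ∅ := by ext q; simp
      simp only [mkTrueSome, seqList, rel_skip, hset, Set.union_empty]
      exact ⟨fun h => h ▸ ⟨subset_rfl, subset_rfl⟩, fun ⟨h1, h2⟩ => subset_antisymm h2 h1⟩
  | cons p ps ih =>
      have hset : {q : PVar U | q ∈ p :: ps} = {p} ∪ {q | q ∈ ps} := by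
        ext q; simp [List.mem_cons]
      simp only [mkTrueSome, seqList] at ih ⊢
      rw [rel_seq, hset, ← Set.union_assoc]
      constructor
      · rintro ⟨u, hu, hw⟩
        rw [rel_choice] at hu
        rw [ih] at hw
        rcases hu with hu | hu
        · rw [rel_add] at hu; subst hu
          exact ⟨fun q hq => hw.1 (Or.inl hq),
            fun q hq => Set.union_subset_union_left _ (subset_rfl) (hw.2 hq)⟩
        · rw [rel_skip] at hu; subst hu
          refine ⟨hw.1, fun q hq => ?_⟩
          rcases hw.2 hq with hq | hq
          · exact Or.inl (Or.inl hq)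
          · exact Or.inr hq
      · rintro ⟨h1, h2⟩
        by_cases hp : p ∈ w
        · refine ⟨v ∪ {p}, Or.inl rfl, ?_⟩
          rw [ih]
          refine ⟨?_, h2⟩
          rintro q (hq | hq)
          · exact h1 hq
          · rcases hq with rfl; exact hp
        · refine ⟨v, Or.inr (by rw [rel_skip]), ?_⟩
          rw [ih]
          refine ⟨h1, fun q hq => ?_⟩
          rcases h2 hq with (hq' | hq') | hq'
          · exact Or.inl hq'
          · rcases hq' with rfl; exact absurd hq hp
          · exact Or.inr hq'

end Aux
section Aux2
open DLPA
variable {U : Type}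

lemma rel_vary (L : List (PVar U)) (v w : Val U) :
    DLPA.Rel (vary L) v w ↔ w \ {p | p ∈ L} = v \ {p | p ∈ L} := by
  induction L generalizing v with
  | nil =>
      have hset : {p : PVar U | p ∈ ([] : List (PVar U))} = ∅ := by ext q; simp
      simp only [vary, seqList, rel_skip, hset, Set.diff_empty]
  | cons p ps ih =>
      have hset : {q : PVar U | q ∈ p :: ps} = {p} ∪ {q | q ∈ ps} := by
        ext q; simp [List.mem_cons]
      simp only [vary, seqList] at ih ⊢
      rw [rel_seq, hset]
      constructor
      · rintro ⟨u, hu, hw⟩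
        rw [rel_choice] at hu
        rw [ih] at hw
        have hup : u \ ({p} ∪ {q | q ∈ ps}) = v \ ({p} ∪ {q | q ∈ ps}) := by
          rcases hu with hu | hu
          · rw [rel_add] at hu; subst hu
            ext q; simp only [Set.mem_diff, Set.mem_union, Set.mem_singleton_iff]
            constructor
            · rintro ⟨(hq | rfl), hq2⟩
              · exact ⟨hq, hq2⟩
              · exact absurd (Or.inl rfl) hq2
            · rintro ⟨hq, hq2⟩; exact ⟨Or.inl hq, hq2⟩
          · rw [rel_rem] at hu; subst hu
            ext q; simp only [Set.mem_diff, Set.mem_union, Set.mem_singleton_iff]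
            constructor
            · rintro ⟨⟨hq, _⟩, hq2⟩; exact ⟨hq, hq2⟩
            · rintro ⟨hq, hq2⟩
              exact ⟨⟨hq, fun h => hq2 (Or.inl h)⟩, hq2⟩
        rw [← hup]
        ext q; simp only [Set.mem_diff, Set.mem_union, Set.mem_singleton_iff] at *
        constructor
        · rintro ⟨hq, hq2⟩
          have : q ∈ w \ {q | q ∈ ps} := ⟨hq, fun h => hq2 (Or.inr h)⟩
          rw [hw] at this
          exact ⟨this.1, hq2⟩
        · rintro ⟨hq, hq2⟩
          have : q ∈ u \ {q | q ∈ ps} := ⟨hq, fun h => hq2 (Or.inr h)⟩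
          rw [← hw] at this
          exact ⟨this.1, hq2⟩
      · intro h
        have key : ∀ q, q ≠ p → q ∉ {q | q ∈ ps} → (q ∈ w ↔ q ∈ v) := by
          intro q hqp hqps
          constructor
          · intro hq
            have : q ∈ w \ ({p} ∪ {q | q ∈ ps}) := ⟨hq, by simp [hqp, hqps]⟩
            rw [h] at this; exact this.1
          · intro hq
            have : q ∈ v \ ({p} ∪ {q | q ∈ ps}) := ⟨hq, by simp [hqp, hqps]⟩
            rw [← h] at this; exact this.1
        by_cases hp : p ∈ w
        · refine ⟨v ∪ {p}, Or.inl rfl, ?_⟩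
          rw [ih]
          ext q
          simp only [Set.mem_diff, Set.mem_union, Set.mem_singleton_iff, Set.mem_setOf_eq]
          by_cases hqp : q = p
          · subst hqp; simp [hp]
          · constructor
            · rintro ⟨hq, hq2⟩
              exact ⟨Or.inl ((key q hqp hq2).mp hq), hq2⟩
            · rintro ⟨hq | rfl, hq2⟩
              · exact ⟨(key q hqp hq2).mpr hq, hq2⟩
              · exact absurd rfl hqp
        · refine ⟨v \ {p}, Or.inr rfl, ?_⟩
          rw [ih]
          ext q
          simp only [Set.mem_diff, Set.mem_singleton_iff, Set.mem_setOf_eq]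
          by_cases hqp : q = p
          · subst hqp; simp [hp]
          · constructor
            · rintro ⟨hq, hq2⟩
              exact ⟨⟨(key q hqp hq2).mp hq, hqp⟩, hq2⟩
            · rintro ⟨⟨hq, _⟩, hq2⟩
              exact ⟨(key q hqp hq2).mpr hq, hq2⟩

/-- The set of acceptance variables. -/
def INset (U : Type) : Set (PVar U) := {p | ∃ x, p = PVar.inn x}

lemma INlist_set (U : Type) [Fintype U] : {p : PVar U | p ∈ INlist U} = INset U := by
  ext q
  simp only [INset, INlist, Set.mem_setOf_eq, List.mem_map, enum, Finset.mem_toList,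
    Finset.mem_univ, true_and]
  constructor
  · rintro ⟨x, rfl⟩; exact ⟨x, rfl⟩
  · rintro ⟨x, rfl⟩; exact ⟨x, rfl⟩

lemma rel_makeExt [Fintype U] (φ : Form U) (v w : Val U) :
    DLPA.Rel (makeExt U φ) v w ↔ w \ INset U = v \ INset U ∧ Sat w φ := by
  simp only [makeExt, rel_seq]
  constructor
  · rintro ⟨u, hu, hw⟩
    rw [rel_vary, INlist_set] at hu
    rw [rel_test] at hw
    rcases hw with ⟨rfl, hsat⟩
    exact ⟨hu, hsat⟩
  · rintro ⟨h, hsat⟩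
    exact ⟨w, by rw [rel_vary, INlist_set]; exact h, by rw [rel_test]; exact ⟨rfl, hsat⟩⟩

lemma agree_off_IN [Fintype U] {v w : Val U} (h : w \ INset U = v \ INset U) :
    Av w = Av v ∧ Rv w = Rv v := by
  have key : ∀ p : PVar U, p ∉ INset U → (p ∈ w ↔ p ∈ v) := by
    intro p hp
    constructor
    · intro hw
      have : p ∈ w \ INset U := ⟨hw, hp⟩
      rw [h] at this; exact this.1
    · intro hv
      have : p ∈ v \ INset U := ⟨hv, hp⟩
      rw [← h] at this; exact this.1
  have haw : ∀ x : U, PVar.aw x ∉ INset U := by rintro x ⟨y, hy⟩; cases hy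
  have hatt : ∀ x y : U, PVar.att x y ∉ INset U := by rintro x y ⟨z, hz⟩; cases hz
  constructor
  · ext x; simp only [Av, Set.mem_setOf_eq]; exact key _ (haw x)
  · have hA : Av w = Av v := by
      ext x; simp only [Av, Set.mem_setOf_eq]; exact key _ (haw x)
    ext q
    simp only [Rv, Set.mem_setOf_eq, hA]
    rw [key _ (hatt q.1 q.2)]

lemma Ev_of_diff [Fintype U] (w : Val U) (E : Set U) :
    Ev ((w \ INset U) ∪ (PVar.inn '' E)) = E := by
  ext x
  simp only [Ev, Set.mem_setOf_eq, Set.mem_union, Set.mem_diff, Set.mem_image]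
  constructor
  · rintro (⟨_, hni⟩ | ⟨y, hy, heq⟩)
    · exact absurd ⟨x, rfl⟩ hni
    · cases heq; exact hy
  · intro hx; exact Or.inr ⟨x, hx, rfl⟩

lemma diff_of_diff [Fintype U] (w : Val U) (E : Set U) :
    ((w \ INset U) ∪ (PVar.inn '' E)) \ INset U = w \ INset U := by
  ext p
  simp only [Set.mem_diff, Set.mem_union, Set.mem_image]
  constructor
  · rintro ⟨(h | ⟨y, _, rfl⟩), hni⟩
    · exact h
    · exact absurd ⟨y, rfl⟩ hni
  · rintro ⟨hw, hni⟩; exact ⟨Or.inl ⟨hw, hni⟩, hni⟩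

end Aux2
section Aux3
open DLPA
variable {U : Type}

lemma mem_valOf_aw (A : Set U) (R : Set (U × U)) (x : U) :
    PVar.aw x ∈ valOf A R ↔ x ∈ A := by
  simp only [valOf, Set.mem_union, Set.mem_image]
  constructor
  · rintro (⟨y, hy, heq⟩ | ⟨q, _, heq⟩)
    · cases heq; exact hy
    · cases heq
  · intro h; exact Or.inl ⟨x, h, rfl⟩

lemma mem_valOf_att (A : Set U) (R : Set (U × U)) (x y : U) :
    PVar.att x y ∈ valOf A R ↔ (x, y) ∈ R := by
  simp only [valOf, Set.mem_union, Set.mem_image]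
  constructor
  · rintro (⟨z, _, heq⟩ | ⟨⟨q1, q2⟩, hq, heq⟩)
    · cases heq
    · cases heq; exact hq
  · intro h; exact Or.inr ⟨(x, y), h, rfl⟩

lemma mem_valOf_inn (A : Set U) (R : Set (U × U)) (x : U) :
    PVar.inn x ∉ valOf A R := by
  simp only [valOf, Set.mem_union, Set.mem_image]
  rintro (⟨y, _, heq⟩ | ⟨q, _, heq⟩) <;> cases heq

lemma Av_valOf (A : Set U) (R : Set (U × U)) : Av (valOf A R) = A := by
  ext x; simp only [Av, Set.mem_setOf_eq, mem_valOf_aw]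

lemma Rv_valOf (A : Set U) (R : Set (U × U)) : Rv (valOf A R) = R ∩ A ×ˢ A := by
  ext ⟨x, y⟩
  simp only [Rv, Set.mem_setOf_eq, Set.mem_inter_iff, Set.mem_prod, Av_valOf, mem_valOf_att]
  tauto

lemma valOf_union (A A' : Set U) (R R' : Set (U × U)) :
    valOf (A ∪ A') (R ∪ R') = valOf A R ∪ valOf A' R' := by
  simp only [valOf, Set.image_union]
  ext p; simp only [Set.mem_union]; tauto


lemma valOf_mono {A A' : Set U} {R R' : Set (U × U)} (hA : A ⊆ A') (hR : R ⊆ R') :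
    valOf A R ⊆ valOf A' R' :=
  Set.union_subset_union (Set.image_mono hA) (Set.image_mono hR)

lemma valOf_aw_union (A A' : Set U) (R : Set (U × U)) :
    valOf (A ∪ A') R = valOf A R ∪ PVar.aw '' A' := by
  simp only [valOf, Set.image_union]
  ext p; simp only [Set.mem_union]; tauto

lemma valOf_att_union (A : Set U) (R R' : Set (U × U)) :
    valOf A (R ∪ R') = valOf A R ∪ (fun q : U × U => PVar.att q.1 q.2) '' R' := by
  simp only [valOf, Set.image_union]
  ext p; simp only [Set.mem_union]; tauto

lemma AWlist_set (A : Finset U) :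
    {p : PVar U | p ∈ AWlist A} = PVar.aw '' (A : Set U) := by
  ext q
  simp only [AWlist, Set.mem_setOf_eq, List.mem_map, Finset.mem_toList, Set.mem_image,
    Finset.mem_coe]

lemma ATTlist_set (R : Finset (U × U)) :
    {p : PVar U | p ∈ ATTlist R} = (fun q : U × U => PVar.att q.1 q.2) '' (R : Set (U × U)) := by
  ext q
  simp only [ATTlist, Set.mem_setOf_eq, List.mem_map, Finset.mem_toList, Set.mem_image,
    Finset.mem_coe]

lemma rel_makeComp (AF Aq : Finset U) (RF Rq : Finset (U × U)) (w : Val U) :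
    DLPA.Rel (Prog.seq (mkTrueSome (AWlist Aq)) (mkTrueSome (ATTlist Rq)))
      (valOf (AF : Set U) (RF : Set (U × U))) w ↔
    ∃ A' ⊆ (Aq : Set U), ∃ R' ⊆ (Rq : Set (U × U)),
      w = valOf ((AF : Set U) ∪ A') ((RF : Set (U × U)) ∪ R') := by
  rw [rel_seq]
  constructor
  · rintro ⟨u, hu, hw⟩
    rw [rel_mkTrueSome, AWlist_set] at hu
    rw [rel_mkTrueSome, ATTlist_set] at hw
    refine ⟨{x | x ∈ (Aq : Set U) ∧ PVar.aw x ∈ w}, fun x hx => hx.1,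
      {q | q ∈ (Rq : Set (U × U)) ∧ PVar.att q.1 q.2 ∈ w}, fun q hq => hq.1, ?_⟩
    have hvw : valOf (AF : Set U) (RF : Set (U × U)) ⊆ w := hu.1.trans hw.1
    ext p
    cases p with
    | aw x =>
        rw [mem_valOf_aw]
        constructor
        · intro hp
          rcases hw.2 hp with hp' | hp'
          · rcases hu.2 hp' with hp'' | hp''
            · exact Or.inl ((mem_valOf_aw _ _ _).mp hp'')
            · rcases hp'' with ⟨y, hy, heq⟩
              cases heq
              exact Or.inr ⟨hy, hp⟩
          · rcases hp' with ⟨q, _, heq⟩; cases heq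
        · rintro (hx | hx)
          · exact hvw ((mem_valOf_aw _ _ x).mpr hx)
          · exact hx.2
    | att x y =>
        rw [mem_valOf_att]
        constructor
        · intro hp
          rcases hw.2 hp with hp' | hp'
          · rcases hu.2 hp' with hp'' | hp''
            · exact Or.inl ((mem_valOf_att _ _ _ _).mp hp'')
            · rcases hp'' with ⟨z, _, heq⟩; cases heq
          · rcases hp' with ⟨⟨q1, q2⟩, hq, heq⟩
            cases heq
            exact Or.inr ⟨hq, hp⟩
        · rintro (hq | hq)
          · exact hvw ((mem_valOf_att _ _ x y).mpr hq)
          · exact hq.2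
    | inn x =>
        simp only [mem_valOf_inn, iff_false]
        intro hp
        rcases hw.2 hp with hp' | hp'
        · rcases hu.2 hp' with hp'' | hp''
          · exact mem_valOf_inn _ _ x hp''
          · rcases hp'' with ⟨y, _, heq⟩; cases heq
        · rcases hp' with ⟨q, _, heq⟩; cases heq
    | inn' x =>
        constructor
        · intro hp
          rcases hw.2 hp with hp' | hp'
          · rcases hu.2 hp' with hp'' | hp''
            · simp only [valOf, Set.mem_union, Set.mem_image] at hp''
              rcases hp'' with ⟨y, _, heq⟩ | ⟨q, _, heq⟩ <;> cases heq
            · rcases hp'' with ⟨y, _, heq⟩; cases heq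
          · rcases hp' with ⟨q, _, heq⟩; cases heq
        · intro hp
          simp only [valOf, Set.mem_union, Set.mem_image] at hp
          rcases hp with ⟨y, _, heq⟩ | ⟨q, _, heq⟩ <;> cases heq
    | aux n =>
        constructor
        · intro hp
          rcases hw.2 hp with hp' | hp'
          · rcases hu.2 hp' with hp'' | hp''
            · simp only [valOf, Set.mem_union, Set.mem_image] at hp''
              rcases hp'' with ⟨y, _, heq⟩ | ⟨q, _, heq⟩ <;> cases heq
            · rcases hp'' with ⟨y, _, heq⟩; cases heq
          · rcases hp' with ⟨q, _, heq⟩; cases heq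
        · intro hp
          simp only [valOf, Set.mem_union, Set.mem_image] at hp
          rcases hp with ⟨y, _, heq⟩ | ⟨q, _, heq⟩ <;> cases heq
  · rintro ⟨A', hA', R', hR', rfl⟩
    refine ⟨valOf ((AF : Set U) ∪ A') (RF : Set (U × U)), ?_, ?_⟩
    · rw [rel_mkTrueSome, AWlist_set]
      constructor
      · exact valOf_mono Set.subset_union_left subset_rfl
      · rw [valOf_aw_union]
        exact Set.union_subset_union_right _ (Set.image_mono hA')
    · rw [rel_mkTrueSome, ATTlist_set]
      constructor
      · rw [valOf_att_union]
        exact Set.subset_union_left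
      · rw [valOf_att_union]
        exact Set.union_subset_union_right _ (Set.image_mono hR')

end Aux3
section Aux4
open DLPA
variable {U : Type} [Fintype U]

lemma sat_makeExt_dia (σ : Set U → Set (U × U) → Set (Set U)) (φσ : Form U)
    (hφ : ∀ v : Val U, Sat v φσ ↔ Ev v ∈ σ (Av v) (Rv v)) (w : Val U) (a : U) :
    Sat w (Form.dia (makeExt U φσ) (Form.var (PVar.inn a))) ↔
      ∃ E ∈ σ (Av w) (Rv w), a ∈ E := by
  rw [sat_dia]
  constructor
  · rintro ⟨u, hrel, hsat⟩
    rw [rel_makeExt] at hrel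
    obtain ⟨hA, hR⟩ := agree_off_IN hrel.1
    refine ⟨Ev u, ?_, hsat⟩
    rw [← hA, ← hR]
    exact (hφ u).mp hrel.2
  · rintro ⟨E, hE, haE⟩
    refine ⟨(w \ INset U) ∪ (PVar.inn '' E), ?_, ?_⟩
    · rw [rel_makeExt]
      refine ⟨diff_of_diff w E, ?_⟩
      rw [hφ]
      obtain ⟨hA, hR⟩ := agree_off_IN (diff_of_diff w E)
      rw [hA, hR, Ev_of_diff]
      exact hE
    · show PVar.inn a ∈ _
      exact Or.inr ⟨a, haE, rfl⟩

lemma sat_makeExt_box (σ : Set U → Set (U × U) → Set (Set U)) (φσ : Form U)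
    (hφ : ∀ v : Val U, Sat v φσ ↔ Ev v ∈ σ (Av v) (Rv v)) (w : Val U) (a : U) :
    Sat w (Form.box (makeExt U φσ) (Form.var (PVar.inn a))) ↔
      ∀ E ∈ σ (Av w) (Rv w), a ∈ E := by
  rw [sat_box]
  constructor
  · intro h E hE
    have hrel : DLPA.Rel (makeExt U φσ) w ((w \ INset U) ∪ (PVar.inn '' E)) := by
      rw [rel_makeExt]
      refine ⟨diff_of_diff w E, ?_⟩
      rw [hφ]
      obtain ⟨hA, hR⟩ := agree_off_IN (diff_of_diff w E)
      rw [hA, hR, Ev_of_diff]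
      exact hE
    have := h _ hrel
    rw [sat_var] at this
    have : a ∈ Ev ((w \ INset U) ∪ (PVar.inn '' E)) := this
    rwa [Ev_of_diff] at this
  · intro h u hrel
    rw [rel_makeExt] at hrel
    obtain ⟨hA, hR⟩ := agree_off_IN hrel.1
    have := (hφ u).mp hrel.2
    rw [hA, hR] at this
    exact h _ this

lemma completion_of_choice {AF Aq : Finset U} {RF Rq : Finset (U × U)}
    {A' : Set U} (hA' : A' ⊆ (Aq : Set U)) {R' : Set (U × U)} (hR' : R' ⊆ (Rq : Set (U × U))) :
    IsCompletionOfIAF (AF : Set U) (Aq : Set U) (RF : Set (U × U)) (Rq : Set (U × U))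
      ((AF : Set U) ∪ A')
      (((RF : Set (U × U)) ∪ R') ∩ ((AF : Set U) ∪ A') ×ˢ ((AF : Set U) ∪ A')) := by
  refine ⟨Set.subset_union_left, Set.union_subset_union_right _ hA', ?_, ?_⟩
  · exact Set.inter_subset_inter_left _ Set.subset_union_left
  · exact Set.inter_subset_inter_left _ (Set.union_subset_union_right _ hR')

lemma choice_of_completion {AF Aq : Finset U} {RF Rq : Finset (U × U)}
    {As : Set U} {Rs : Set (U × U)}
    (h : IsCompletionOfIAF (AF : Set U) (Aq : Set U) (RF : Set (U × U)) (Rq : Set (U × U)) As Rs) :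
    ∃ A' ⊆ (Aq : Set U), ∃ R' ⊆ (Rq : Set (U × U)),
      As = (AF : Set U) ∪ A' ∧ Rs = ((RF : Set (U × U)) ∪ R') ∩ As ×ˢ As := by
  obtain ⟨h1, h2, h3, h4⟩ := h
  refine ⟨As \ (AF : Set U), ?_, Rs \ (RF : Set (U × U)), ?_, ?_, ?_⟩
  · intro x hx
    rcases h2 hx.1 with h | h
    · exact absurd h hx.2
    · exact h
  · intro q hq
    rcases (h4 hq.1).1 with h | h
    · exact absurd h hq.2
    · exact h
  · rw [Set.union_diff_cancel h1]
  · apply subset_antisymm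
    · intro q hq
      refine ⟨?_, (h4 hq).2⟩
      by_cases hf : q ∈ (RF : Set (U × U))
      · exact Or.inl hf
      · exact Or.inr ⟨hq, hf⟩
    · intro q hq
      rcases hq with ⟨hq1 | hq1, hq2⟩
      · exact h3 ⟨hq1, hq2⟩
      · exact hq1.1

end Aux4
open DLPA in
/-- Proposition 3. -/
theorem acceptance_reductions_IAF
    (U : Type) [Fintype U] [Nonempty U]
    (AF Aq : Finset U) (RF Rq : Finset (U × U))
    (hIAF : IAFConds (AF : Set U) (Aq : Set U) (RF : Set (U × U)) (Rq : Set (U × U)))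
    (a : U) (ha : a ∈ AF)
    (σ : Set U → Set (U × U) → Set (Set U)) (φσ : Form U)
    (hφ : ∀ v : Val U, Sat v φσ ↔ Ev v ∈ σ (Av v) (Rv v)) :
    ((∀ (As : Set U) (Rs : Set (U × U)),
        IsCompletionOfIAF (AF : Set U) (Aq : Set U) (RF : Set (U × U)) (Rq : Set (U × U)) As Rs →
        ∀ E ∈ σ As Rs, a ∈ E) ↔
      Sat (valOf (AF : Set U) (RF : Set (U × U)))
        (Form.box (Prog.seq (Prog.seq (mkTrueSome (AWlist Aq)) (mkTrueSome (ATTlist Rq)))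
            (makeExt U φσ))
          (Form.var (PVar.inn a)))) ∧
    ((∀ (As : Set U) (Rs : Set (U × U)),
        IsCompletionOfIAF (AF : Set U) (Aq : Set U) (RF : Set (U × U)) (Rq : Set (U × U)) As Rs →
        ∃ E ∈ σ As Rs, a ∈ E) ↔
      Sat (valOf (AF : Set U) (RF : Set (U × U)))
        (Form.box (Prog.seq (mkTrueSome (AWlist Aq)) (mkTrueSome (ATTlist Rq)))
          (Form.dia (makeExt U φσ) (Form.var (PVar.inn a))))) ∧
    ((∃ (As : Set U) (Rs : Set (U × U)),
        IsCompletionOfIAF (AF : Set U) (Aq : Set U) (RF : Set (U × U)) (Rq : Set (U × U)) As Rs ∧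
        ∃ E ∈ σ As Rs, a ∈ E) ↔
      Sat (valOf (AF : Set U) (RF : Set (U × U)))
        (Form.dia (Prog.seq (Prog.seq (mkTrueSome (AWlist Aq)) (mkTrueSome (ATTlist Rq)))
            (makeExt U φσ))
          (Form.var (PVar.inn a)))) ∧
    ((∃ (As : Set U) (Rs : Set (U × U)),
        IsCompletionOfIAF (AF : Set U) (Aq : Set U) (RF : Set (U × U)) (Rq : Set (U × U)) As Rs ∧
        ∀ E ∈ σ As Rs, a ∈ E) ↔
      Sat (valOf (AF : Set U) (RF : Set (U × U)))
        (Form.dia (Prog.seq (mkTrueSome (AWlist Aq)) (mkTrueSome (ATTlist Rq)))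
          (Form.box (makeExt U φσ) (Form.var (PVar.inn a))))) := by

  refine ⟨?_, ?_, ?_, ?_⟩
  · -- (1) box (seq mkc mke)
    rw [sat_box]
    constructor
    · intro H w hw
      rw [rel_seq] at hw
      obtain ⟨u, hu, hw2⟩ := hw
      rw [rel_makeComp] at hu
      obtain ⟨A', hA', R', hR', rfl⟩ := hu
      have hbox : Sat (valOf ((AF : Set U) ∪ A') ((RF : Set (U × U)) ∪ R'))
          (Form.box (makeExt U φσ) (Form.var (PVar.inn a))) := by
        rw [sat_makeExt_box σ φσ hφ, Av_valOf, Rv_valOf]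
        exact H _ _ (completion_of_choice hA' hR')
      exact hbox w hw2
    · intro H As Rs hc E hE
      obtain ⟨A', hA', R', hR', rfl, rfl⟩ := choice_of_completion hc
      have hu : DLPA.Rel (Prog.seq (mkTrueSome (AWlist Aq)) (mkTrueSome (ATTlist Rq)))
          (valOf (AF : Set U) (RF : Set (U × U)))
          (valOf ((AF : Set U) ∪ A') ((RF : Set (U × U)) ∪ R')) :=
        (rel_makeComp AF Aq RF Rq _).mpr ⟨A', hA', R', hR', rfl⟩
      have hbox : Sat (valOf ((AF : Set U) ∪ A') ((RF : Set (U × U)) ∪ R'))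
          (Form.box (makeExt U φσ) (Form.var (PVar.inn a))) :=
        fun w hw => H w ⟨_, hu, hw⟩
      rw [sat_makeExt_box σ φσ hφ, Av_valOf, Rv_valOf] at hbox
      exact hbox E hE
  · -- (2) box mkc (dia mke)
    rw [sat_box]
    constructor
    · intro H u hu
      rw [rel_makeComp] at hu
      obtain ⟨A', hA', R', hR', rfl⟩ := hu
      rw [sat_makeExt_dia σ φσ hφ, Av_valOf, Rv_valOf]
      exact H _ _ (completion_of_choice hA' hR')
    · intro H As Rs hc
      obtain ⟨A', hA', R', hR', rfl, rfl⟩ := choice_of_completion hc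
      have hu := (rel_makeComp AF Aq RF Rq
          (valOf ((AF : Set U) ∪ A') ((RF : Set (U × U)) ∪ R'))).mpr ⟨A', hA', R', hR', rfl⟩
      have := H _ hu
      rwa [sat_makeExt_dia σ φσ hφ, Av_valOf, Rv_valOf] at this
  · -- (3) dia (seq mkc mke)
    rw [sat_dia]
    constructor
    · rintro ⟨As, Rs, hc, hE⟩
      obtain ⟨A', hA', R', hR', rfl, rfl⟩ := choice_of_completion hc
      have hu := (rel_makeComp AF Aq RF Rq
          (valOf ((AF : Set U) ∪ A') ((RF : Set (U × U)) ∪ R'))).mpr ⟨A', hA', R', hR', rfl⟩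
      have hdia : Sat (valOf ((AF : Set U) ∪ A') ((RF : Set (U × U)) ∪ R'))
          (Form.dia (makeExt U φσ) (Form.var (PVar.inn a))) := by
        rw [sat_makeExt_dia σ φσ hφ, Av_valOf, Rv_valOf]
        exact hE
      rw [sat_dia] at hdia
      obtain ⟨w, hw, hsat⟩ := hdia
      exact ⟨w, ⟨_, hu, hw⟩, hsat⟩
    · rintro ⟨w, hrel, hsat⟩
      rw [rel_seq] at hrel
      obtain ⟨u, hu, hw⟩ := hrel
      rw [rel_makeComp] at hu
      obtain ⟨A', hA', R', hR', rfl⟩ := hu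
      refine ⟨_, _, completion_of_choice hA' hR', ?_⟩
      have hdia : Sat (valOf ((AF : Set U) ∪ A') ((RF : Set (U × U)) ∪ R'))
          (Form.dia (makeExt U φσ) (Form.var (PVar.inn a))) := by
        rw [sat_dia]; exact ⟨w, hw, hsat⟩
      rwa [sat_makeExt_dia σ φσ hφ, Av_valOf, Rv_valOf] at hdia
  · -- (4) dia mkc (box mke)
    rw [sat_dia]
    constructor
    · rintro ⟨As, Rs, hc, hE⟩
      obtain ⟨A', hA', R', hR', rfl, rfl⟩ := choice_of_completion hc
      have hu := (rel_makeComp AF Aq RF Rq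
          (valOf ((AF : Set U) ∪ A') ((RF : Set (U × U)) ∪ R'))).mpr ⟨A', hA', R', hR', rfl⟩
      refine ⟨_, hu, ?_⟩
      rw [sat_makeExt_box σ φσ hφ, Av_valOf, Rv_valOf]
      exact hE
    · rintro ⟨u, hu, hsat⟩
      rw [rel_makeComp] at hu
      obtain ⟨A', hA', R', hR', rfl⟩ := hu
      refine ⟨_, _, completion_of_choice hA' hR', ?_⟩
      rwa [sat_makeExt_box σ φσ hφ, Av_valOf, Rv_valOf] at hsat
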